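/- Let (X,σ) be a shift space whose language 𝓛 admits a decomposition 𝓛 = 𝓒^p 𝓖 𝓒^s satisfying Conditions (I) and (II). Then for every δ > 0 there exists M ∈ ℕ such that #𝓖(M)_n ≥ (1 − δ) · #𝓛_n for all n ∈ ℕ. -/

import Mathlib

open MeasureTheory Filter Topology
open scoped ENNReal

/-- The full two-sided shift on `p` symbols. -/
abbrev FullShift (p : ℕ) : Type := ℤ → Fin p

/-- The left shift map. -/
def shiftMap {p : ℕ} : FullShift p → FullShift p := fun x n => x (n + 1)

/-- A (two-sided) shift space: a nonempty closed shift-invariant subset of the full shift. -/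
def IsShiftSpace {p : ℕ} (X : Set (FullShift p)) : Prop :=
  X.Nonempty ∧ IsClosed X ∧ shiftMap '' X = X

/-- `x` spells the word `w` starting at position `k`. -/
def spellsAt {p : ℕ} (x : FullShift p) (k : ℤ) (w : List (Fin p)) : Prop :=
  ∀ i : Fin w.length, x (k + (i : ℕ)) = w.get i

/-- The language of a shift space: all finite words occurring in its sequences. -/
def language {p : ℕ} (X : Set (FullShift p)) : Set (List (Fin p)) :=
  {w | ∃ x ∈ X, ∃ k : ℤ, spellsAt x k w}

/-- Words of length `n` in a collection `D`. -/
def wordsOfLen {p : ℕ} (D : Set (List (Fin p))) (n : ℕ) : Set (List (Fin p)) :=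
  {w ∈ D | w.length = n}

/-- Exponential growth rate `h(D) = limsup (1/n) log #D_n` of a collection of words. -/
noncomputable def growth {p : ℕ} (D : Set (List (Fin p))) : ℝ :=
  Filter.atTop.limsup fun n : ℕ => Real.log ((wordsOfLen D n).ncard) / n

/-- Topological entropy of a shift space (= the growth rate of its language). -/
noncomputable def htop {p : ℕ} (X : Set (FullShift p)) : ℝ := growth (language X)

/-- `glueWords m w v = w 0 ++ v 0 ++ w 1 ++ v 1 ++ ⋯ ++ v (m-1) ++ w m`. -/
def glueWords {p : ℕ} : ℕ → (ℕ → List (Fin p)) → (ℕ → List (Fin p)) → List (Fin p)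
  | 0, w, _ => w 0
  | (m + 1), w, v => glueWords m w v ++ v m ++ w (m + 1)

/-- (S)-specification on `G ⊆ L` with gap size `t`. -/
def HasSpecS {p : ℕ} (L G : Set (List (Fin p))) (t : ℕ) : Prop :=
  ∀ (m : ℕ) (w : ℕ → List (Fin p)), (∀ i ≤ m, w i ∈ G) →
    ∃ v : ℕ → List (Fin p), (∀ i < m, v i ∈ L ∧ (v i).length = t) ∧
      glueWords m w v ∈ L

/-- The central cylinder of a word `w`, starting at position `-⌊|w|/2⌋`. -/
def centralCylinder {p : ℕ} (w : List (Fin p)) : Set (FullShift p) :=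
  {x | spellsAt x (-((w.length / 2 : ℕ) : ℤ)) w}

/-- (Per)-specification on `G` with gap size `t`: the glued word can moreover be realized by
a periodic point of period exactly `|x| + t`. -/
def HasSpecPer {p : ℕ} (X : Set (FullShift p)) (G : Set (List (Fin p))) (t : ℕ) : Prop :=
  ∀ (m : ℕ) (w : ℕ → List (Fin p)), (∀ i ≤ m, w i ∈ G) →
    ∃ v : ℕ → List (Fin p), (∀ i < m, v i ∈ language X ∧ (v i).length = t) ∧
      glueWords m w v ∈ language X ∧
      ∃ z ∈ X, shiftMap^[(glueWords m w v).length + t] z = z ∧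
        z ∈ centralCylinder (glueWords m w v)

/-- A decomposition `L = 𝓒ᵖ 𝓖 𝓒ˢ` of a language. -/
def Decomp {p : ℕ} (L Cp G Cs : Set (List (Fin p))) : Prop :=
  Cp ⊆ L ∧ G ⊆ L ∧ Cs ⊆ L ∧
    ∀ w ∈ L, ∃ u v x, u ∈ Cp ∧ v ∈ G ∧ x ∈ Cs ∧ w = u ++ v ++ x

/-- `𝓖(M)`: words of `L` decomposable with prefix and suffix of length at most `M`. -/
def GM {p : ℕ} (L Cp G Cs : Set (List (Fin p))) (M : ℕ) : Set (List (Fin p)) :=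
  {w ∈ L | ∃ u v x, u ∈ Cp ∧ v ∈ G ∧ x ∈ Cs ∧ u.length ≤ M ∧ x.length ≤ M ∧ w = u ++ v ++ x}

/-- Condition (III): uniformly controlled extension of words of `𝓖(M)` to words of `𝓖`. -/
def CondIII {p : ℕ} (L Cp G Cs : Set (List (Fin p))) : Prop :=
  ∀ M : ℕ, ∃ τ : ℕ, ∀ v ∈ GM L Cp G Cs M,
    ∃ u w : List (Fin p), u.length ≤ τ ∧ w.length ≤ τ ∧ u ++ v ++ w ∈ G

/-- Shift invariance of a measure. -/
def ShiftInvariant {p : ℕ} (μ : Measure (FullShift p)) : Prop :=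
  Measure.map shiftMap μ = μ

/-- Measure-theoretic (Kolmogorov–Sinai) entropy of a shift-invariant measure, computed via
the generating partitions into cylinders of length `n`. -/
noncomputable def entropyOf {p : ℕ} (μ : Measure (FullShift p)) : ℝ :=
  Filter.atTop.liminf fun n : ℕ =>
    (∑ w : Fin n → Fin p,
      Real.negMulLog (μ {x : FullShift p | ∀ i : Fin n, x ((i : ℕ) : ℤ) = w i}).toReal) / n

/-- `μ` is a measure of maximal entropy for the shift space `X`. -/
def IsMME {p : ℕ} (X : Set (FullShift p)) (μ : Measure (FullShift p)) : Prop :=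
  IsProbabilityMeasure μ ∧ ShiftInvariant μ ∧ μ X = 1 ∧ entropyOf μ = htop X

/-- A shift space is intrinsically ergodic if it has exactly one measure of maximal entropy. -/
def IntrinsicallyErgodic {p : ℕ} (X : Set (FullShift p)) : Prop :=
  ∃! μ : Measure (FullShift p), IsMME X μ

/-- The set of points of `X` periodic of period at most `n`. -/
def PerN {p : ℕ} (X : Set (FullShift p)) (n : ℕ) : Set (FullShift p) :=
  {x ∈ X | ∃ k, 1 ≤ k ∧ k ≤ n ∧ shiftMap^[k] x = x}

/-- The measure evenly distributed on the periodic points of period at most `n`. -/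
noncomputable def perMeasure {p : ℕ} (X : Set (FullShift p)) (n : ℕ) :
    Measure (FullShift p) :=
  (((PerN X n).ncard : ℝ≥0∞))⁻¹ •
    Measure.sum (fun x : (PerN X n) => Measure.dirac (x : FullShift p))

/-- Weak* convergence of a sequence of measures. -/
def WeakStarLimit {p : ℕ} (μs : ℕ → Measure (FullShift p)) (μ : Measure (FullShift p)) : Prop :=
  ∀ f : C(FullShift p, ℝ),
    Tendsto (fun n => ∫ x, f x ∂(μs n)) atTop (𝓝 (∫ x, f x ∂μ))

/-- `Y` is a subshift factor of `X`. -/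
def IsSubshiftFactor {p q : ℕ} (X : Set (FullShift p)) (Y : Set (FullShift q)) : Prop :=
  IsShiftSpace Y ∧ ∃ π : FullShift p → FullShift q,
    Continuous π ∧ π '' X = Y ∧ ∀ x ∈ X, π (shiftMap x) = shiftMap (π x)

/-!
Write `h = h_top(X)`. A word of `𝓛ₙ` outside `𝓖(M)` is `uvx` with `u ∈ 𝓒ᵖ`, `v ∈ 𝓖`, `x ∈ 𝓒ˢ`
and `|u| + |x| > M`. Gluing words of `𝓖_j` by (I) embeds `(𝓖_j)^m` into `𝓛`, whence
`#𝓖_j ≤ e^{h(j+t)}`; by (II), `#𝓒ᵖ_k, #𝓒ˢ_k ≤ B e^{ck}` for some `c < h`; and by Fekete's lemma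
`#𝓛ₙ ≥ e^{hn}`. Summing over the lengths `(|u|, |x|)` bounds the number of bad words by
`B² e^{ht} e^{hn} ∑_{a+b>M} e^{-(h-c)(a+b)}`, a geometric tail which is `≤ δ e^{hn} ≤ δ #𝓛ₙ`
once `M` is large.
-/

section Words

variable {p : ℕ}

lemma wordsOfLen_finite (D : Set (List (Fin p))) (n : ℕ) : (wordsOfLen D n).Finite :=
  (List.finite_length_eq (Fin p) n).subset fun _ hw => hw.2

lemma ncard_wordsOfLen_mono {D E : Set (List (Fin p))} (h : D ⊆ E) (n : ℕ) :
    (wordsOfLen D n).ncard ≤ (wordsOfLen E n).ncard :=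
  Set.ncard_le_ncard (fun _ hw => ⟨h hw.1, hw.2⟩) (wordsOfLen_finite E n)

lemma ncard_wordsOfLen_le_pow (D : Set (List (Fin p))) (n : ℕ) :
    (wordsOfLen D n).ncard ≤ p ^ n :=
  calc (wordsOfLen D n).ncard ≤ {w : List (Fin p) | w.length = n}.ncard :=
        Set.ncard_le_ncard (fun _ hw => hw.2) (List.finite_length_eq (Fin p) n)
    _ = Nat.card (List.Vector (Fin p) n) := Nat.card_coe_set_eq _ |>.symm
    _ = p ^ n := by simp

lemma log_ncard_wordsOfLen_div_le (D : Set (List (Fin p))) (n : ℕ) :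
    Real.log (wordsOfLen D n).ncard / n ≤ Real.log p := by
  have hlog : Real.log (wordsOfLen D n).ncard ≤ Real.log p * n := by
    rcases Nat.eq_zero_or_pos (wordsOfLen D n).ncard with h0 | hpos
    · rw [h0, Nat.cast_zero, Real.log_zero]
      exact mul_nonneg (Real.log_natCast_nonneg p) n.cast_nonneg
    · calc Real.log (wordsOfLen D n).ncard ≤ Real.log ((p : ℝ) ^ n) :=
            Real.log_le_log (by exact_mod_cast hpos) (by exact_mod_cast ncard_wordsOfLen_le_pow D n)
        _ = Real.log p * n := by rw [Real.log_pow, mul_comm]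
  exact div_le_of_le_mul₀ n.cast_nonneg (Real.log_natCast_nonneg p) hlog

lemma isBoundedUnder_log_ncard_wordsOfLen_div (D : Set (List (Fin p))) :
    IsBoundedUnder (· ≤ ·) atTop fun n : ℕ => Real.log (wordsOfLen D n).ncard / n :=
  isBoundedUnder_of ⟨Real.log p, log_ncard_wordsOfLen_div_le D⟩

lemma growth_nonneg (D : Set (List (Fin p))) : 0 ≤ growth D :=
  le_limsup_of_frequently_le (Frequently.of_forall fun n =>
    div_nonneg (Real.log_natCast_nonneg _) n.cast_nonneg) (isBoundedUnder_log_ncard_wordsOfLen_div D)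

lemma exists_ncard_wordsOfLen_le_mul_exp {D : Set (List (Fin p))} {c : ℝ} (hc : growth D < c) :
    ∃ B, 0 < B ∧ ∀ n : ℕ, ((wordsOfLen D n).ncard : ℝ) ≤ B * Real.exp (c * n) := by
  have hev : ∀ᶠ n : ℕ in atTop, ((wordsOfLen D n).ncard : ℝ) ≤ Real.exp (c * n) := by
    filter_upwards [eventually_lt_of_limsup_lt hc (isBoundedUnder_log_ncard_wordsOfLen_div D),
      eventually_gt_atTop 0] with n hn hn0
    rcases Nat.eq_zero_or_pos (wordsOfLen D n).ncard with h0 | hpos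
    · rw [h0, Nat.cast_zero]
      positivity
    · rw [div_lt_iff₀ (by exact_mod_cast hn0)] at hn
      rw [← Real.exp_log (by exact_mod_cast hpos : (0 : ℝ) < (wordsOfLen D n).ncard)]
      exact Real.exp_le_exp.2 hn.le
  have hO : (fun n : ℕ => ((wordsOfLen D n).ncard : ℝ)) =O[cofinite] fun n => Real.exp (c * n) := by
    rw [Nat.cofinite_eq_atTop]
    refine Asymptotics.IsBigO.of_bound 1 (hev.mono fun n hn => ?_)
    simpa [Real.norm_eq_abs, abs_of_nonneg (Real.exp_pos _).le] using hn
  obtain ⟨B, hB, hbound⟩ := Asymptotics.bound_of_isBigO_cofinite hO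
  refine ⟨B, hB, fun n => ?_⟩
  simpa [Real.norm_eq_abs, abs_of_nonneg (Real.exp_pos _).le] using
    hbound (Real.exp_pos (c * n)).ne'

end Words

section Language

variable {p : ℕ} {X : Set (FullShift p)}

lemma take_mem_language {w : List (Fin p)} (hw : w ∈ language X) (m : ℕ) :
    w.take m ∈ language X := by
  obtain ⟨x, hx, k, hk⟩ := hw
  refine ⟨x, hx, k, fun i => ?_⟩
  simpa using hk ⟨i, lt_of_lt_of_le i.isLt (List.length_take_le' m w)⟩

lemma drop_mem_language {w : List (Fin p)} (hw : w ∈ language X) (m : ℕ) :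
    w.drop m ∈ language X := by
  obtain ⟨x, hx, k, hk⟩ := hw
  refine ⟨x, hx, k + m, fun i => ?_⟩
  have hi : m + (i : ℕ) < w.length := by have := i.isLt; simp only [List.length_drop] at this; omega
  simpa [add_assoc] using hk ⟨m + i, hi⟩

lemma ncard_wordsOfLen_language_pos (hX : X.Nonempty) (n : ℕ) :
    0 < (wordsOfLen (language X) n).ncard := by
  obtain ⟨x, hx⟩ := hX
  refine (Set.ncard_pos (wordsOfLen_finite _ n)).2
    ⟨List.ofFn fun i : Fin n => x i, ⟨x, hx, 0, fun i => ?_⟩, List.length_ofFn⟩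
  simp

lemma ncard_wordsOfLen_language_add_le (m n : ℕ) :
    (wordsOfLen (language X) (m + n)).ncard ≤
      (wordsOfLen (language X) m).ncard * (wordsOfLen (language X) n).ncard := by
  rw [← Set.ncard_prod]
  refine Set.ncard_le_ncard_of_injOn (fun w => (w.take m, w.drop m)) ?_ ?_
    ((wordsOfLen_finite _ m).prod (wordsOfLen_finite _ n))
  · rintro w ⟨hw, hlen⟩
    exact ⟨⟨take_mem_language hw m, by simp [hlen]⟩, ⟨drop_mem_language hw m, by simp [hlen]⟩⟩
  · intro w _ w' _ h
    simp only [Prod.mk.injEq] at h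
    rw [← List.take_append_drop m w, ← List.take_append_drop m w', h.1, h.2]

lemma subadditive_log_ncard_language (hX : X.Nonempty) :
    Subadditive fun n => Real.log (wordsOfLen (language X) n).ncard := by
  intro m n
  have hpos : ∀ k, (0 : ℝ) < (wordsOfLen (language X) k).ncard := fun k => by
    exact_mod_cast ncard_wordsOfLen_language_pos hX k
  rw [← Real.log_mul (hpos m).ne' (hpos n).ne']
  exact Real.log_le_log (hpos _) (by exact_mod_cast ncard_wordsOfLen_language_add_le m n)

lemma bddBelow_log_ncard_language_div :
    BddBelow (Set.range fun n : ℕ => Real.log (wordsOfLen (language X) n).ncard / n) :=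
  ⟨0, by rintro _ ⟨n, rfl⟩; exact div_nonneg (Real.log_natCast_nonneg _) n.cast_nonneg⟩

lemma tendsto_log_ncard_language_div (hX : X.Nonempty) :
    Tendsto (fun n : ℕ => Real.log (wordsOfLen (language X) n).ncard / n) atTop
      (𝓝 (htop X)) := by
  have h := (subadditive_log_ncard_language hX).tendsto_lim bddBelow_log_ncard_language_div
  rwa [htop, growth, h.limsup_eq]

lemma exp_htop_mul_le_ncard (hX : X.Nonempty) (n : ℕ) :
    Real.exp (htop X * n) ≤ (wordsOfLen (language X) n).ncard := by
  have hu := subadditive_log_ncard_language hX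
  have hlim : htop X = hu.lim :=
    (hu.tendsto_lim bddBelow_log_ncard_language_div).limsup_eq
  have hpos : (0 : ℝ) < (wordsOfLen (language X) n).ncard := by
    exact_mod_cast ncard_wordsOfLen_language_pos hX n
  rcases Nat.eq_zero_or_pos n with rfl | hn
  · simpa [Nat.one_le_iff_ne_zero] using (ncard_wordsOfLen_language_pos hX 0).ne'
  rw [← Real.exp_log hpos, Real.exp_le_exp, ← le_div_iff₀ (by exact_mod_cast hn), hlim]
  exact hu.lim_le_div bddBelow_log_ncard_language_div hn.ne'

lemma nonempty_of_htop_pos (hX : 0 < htop X) : X.Nonempty := by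
  rw [Set.nonempty_iff_ne_empty]
  rintro rfl
  have hL : language (∅ : Set (FullShift p)) = ∅ := by simp [language]
  simp [htop, growth, hL, wordsOfLen] at hX

end Language

section Specification

variable {p : ℕ} {j t : ℕ} {w v : ℕ → List (Fin p)}

lemma glueWords_length (m : ℕ) (hw : ∀ i ≤ m, (w i).length = j)
    (hv : ∀ i < m, (v i).length = t) :
    (glueWords m w v).length = (m + 1) * j + m * t := by
  induction m with
  | zero => simp [glueWords, hw 0 le_rfl]
  | succ m ih =>
    rw [glueWords, List.length_append, List.length_append,
      ih (fun i hi => hw i (by omega)) (fun i hi => hv i (by omega)), hw (m + 1) le_rfl,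
      hv m (by omega)]
    ring

lemma take_drop_glueWords (m : ℕ) (hw : ∀ i ≤ m, (w i).length = j)
    (hv : ∀ i < m, (v i).length = t) {i : ℕ} (hi : i ≤ m) :
    ((glueWords m w v).drop (i * (j + t))).take j = w i := by
  induction m with
  | zero =>
    obtain rfl : i = 0 := by omega
    simp [glueWords, List.take_of_length_le (hw 0 le_rfl).le]
  | succ m ih =>
    have hw' : ∀ i ≤ m, (w i).length = j := fun i hi => hw i (by omega)
    have hv' : ∀ i < m, (v i).length = t := fun i hi => hv i (by omega)
    have hlen := glueWords_length m hw' hv'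
    rcases Nat.lt_or_eq_of_le hi with hi | rfl
    · have hij : i * (j + t) + j ≤ (glueWords m w v).length := by
        rw [hlen]; nlinarith
      rw [glueWords, List.append_assoc, List.drop_append_of_le_length (by omega),
        List.take_append_of_le_length (by rw [List.length_drop]; omega)]
      exact ih hw' hv' (by omega)
    · have hlen' : (glueWords m w v ++ v m).length = (m + 1) * (j + t) := by
        rw [List.length_append, hlen, hv m (by omega)]; ring
      rw [glueWords, List.drop_left' hlen', List.take_of_length_le (hw (m + 1) le_rfl).le]

lemma ncard_wordsOfLen_pow_le_of_hasSpecS {L G : Set (List (Fin p))}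
    (hspec : HasSpecS L G t) (j m : ℕ) :
    (wordsOfLen G j).ncard ^ (m + 1) ≤ (wordsOfLen L ((m + 1) * j + m * t)).ncard := by
  have := (wordsOfLen_finite L ((m + 1) * j + m * t)).to_subtype
  let words (f : Fin (m + 1) → wordsOfLen G j) (i : ℕ) : List (Fin p) :=
    if h : i < m + 1 then f ⟨i, h⟩ else []
  have hwords : ∀ f, ∀ i ≤ m, words f i ∈ wordsOfLen G j := fun f i hi => by
    simp only [words, dif_pos (Nat.lt_succ_of_le hi)]
    exact (f ⟨i, Nat.lt_succ_of_le hi⟩).2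
  choose gaps hgaps hglue using fun f => hspec m (words f) fun i hi => (hwords f i hi).1
  let glue (f : Fin (m + 1) → wordsOfLen G j) : wordsOfLen L ((m + 1) * j + m * t) :=
    ⟨glueWords m (words f) (gaps f), hglue f,
      glueWords_length m (fun i hi => (hwords f i hi).2) fun i hi => (hgaps f i hi).2⟩
  have hinj : Function.Injective glue := fun f g hfg => funext fun i => Subtype.ext <| by
    have hf := take_drop_glueWords m (fun i hi => (hwords f i hi).2)
      (fun i hi => (hgaps f i hi).2) (Nat.lt_succ_iff.1 i.isLt)
    have hg := take_drop_glueWords m (fun i hi => (hwords g i hi).2)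
      (fun i hi => (hgaps g i hi).2) (Nat.lt_succ_iff.1 i.isLt)
    rw [show glueWords m (words f) (gaps f) = glueWords m (words g) (gaps g) from
      congrArg Subtype.val hfg, hg] at hf
    simpa only [words, dif_pos i.isLt] using hf.symm
  calc (wordsOfLen G j).ncard ^ (m + 1) = Nat.card (Fin (m + 1) → wordsOfLen G j) := by
        rw [Nat.card_fun, Nat.card_coe_set_eq, Nat.card_fin]
    _ ≤ Nat.card (wordsOfLen L ((m + 1) * j + m * t)) := Nat.card_le_card_of_injective glue hinj
    _ = _ := Nat.card_coe_set_eq _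

end Specification

lemma le_mul_of_tendsto_div {u : ℕ → ℝ} {N : ℕ → ℕ} {h c y : ℝ}
    (hu : Tendsto (fun n : ℕ => u n / n) atTop (𝓝 h)) (hN : Tendsto N atTop atTop)
    (hNc : Tendsto (fun m : ℕ => (N m : ℝ) / (m + 1)) atTop (𝓝 c))
    (hy : ∀ m : ℕ, (m + 1) * y ≤ u (N m)) : y ≤ h * c := by
  have hlim : Tendsto (fun m : ℕ => u (N m) / (m + 1)) atTop (𝓝 (h * c)) := by
    refine ((hu.comp hN).mul hNc).congr' ?_
    filter_upwards [hN.eventually_gt_atTop 0] with m hm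
    exact div_mul_div_cancel₀ (by exact_mod_cast hm.ne')
  exact ge_of_tendsto hlim (Eventually.of_forall fun m => (le_div_iff₀' (by positivity)).2 (hy m))

lemma ncard_wordsOfLen_le_exp_of_hasSpecS {p t : ℕ} {L G : Set (List (Fin p))} {h : ℝ}
    (hspec : HasSpecS L G t) (hh : 0 ≤ h)
    (hL : Tendsto (fun n : ℕ => Real.log (wordsOfLen L n).ncard / n) atTop (𝓝 h)) (j : ℕ) :
    ((wordsOfLen G j).ncard : ℝ) ≤ Real.exp (h * (j + t)) := by
  rcases Nat.eq_zero_or_pos j with rfl | hj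
  · calc ((wordsOfLen G 0).ncard : ℝ) ≤ 1 := by exact_mod_cast ncard_wordsOfLen_le_pow G 0
      _ ≤ _ := Real.one_le_exp (by positivity)
  rcases Nat.eq_zero_or_pos (wordsOfLen G j).ncard with h0 | hpos
  · rw [h0, Nat.cast_zero]
    positivity
  rw [← Real.exp_log (by exact_mod_cast hpos : (0 : ℝ) < (wordsOfLen G j).ncard),
    Real.exp_le_exp]
  refine le_mul_of_tendsto_div hL (N := fun m => (m + 1) * j + m * t) ?_ ?_ fun m => ?_
  · exact tendsto_atTop_mono (fun m => show m ≤ (m + 1) * j + m * t by nlinarith) tendsto_id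
  · have h0 := (tendsto_const_nhds (x := ((j : ℝ) + t))).sub
      ((tendsto_const_nhds (x := (t : ℝ))).mul tendsto_one_div_add_atTop_nhds_zero_nat)
    rw [mul_zero, sub_zero] at h0
    refine h0.congr fun m => ?_
    field_simp
    push_cast
    ring
  · rw [show ((m : ℝ) + 1) = ((m + 1 : ℕ) : ℝ) by push_cast; ring, ← Real.log_pow]
    exact Real.log_le_log (by positivity)
      (by exact_mod_cast ncard_wordsOfLen_pow_le_of_hasSpecS hspec j m)

/-- The possible lengths `(|u|, |x|)` in a decomposition `uvx` of a word of length `n` outside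
`𝓖(M)`. -/
def badPairs (M n : ℕ) : Finset (ℕ × ℕ) :=
  (Finset.range (n + 1) ×ˢ Finset.range (n + 1)).filter fun q => M < q.1 + q.2 ∧ q.1 + q.2 ≤ n

lemma ncard_wordsOfLen_le_ncard_GM_add_sum {p : ℕ} {L Cp G Cs : Set (List (Fin p))}
    (hcover : ∀ w ∈ L, ∃ u v x, u ∈ Cp ∧ v ∈ G ∧ x ∈ Cs ∧ w = u ++ v ++ x) (M n : ℕ) :
    (wordsOfLen L n).ncard ≤ (wordsOfLen (GM L Cp G Cs M) n).ncard +
      ∑ q ∈ badPairs M n, (wordsOfLen Cp q.1).ncard * (wordsOfLen G (n - q.1 - q.2)).ncard *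
        (wordsOfLen Cs q.2).ncard := by
  let concat (q : ℕ × ℕ) : Set (List (Fin p)) := (fun uvx => uvx.1 ++ uvx.2.1 ++ uvx.2.2) ''
    (wordsOfLen Cp q.1 ×ˢ wordsOfLen G (n - q.1 - q.2) ×ˢ wordsOfLen Cs q.2)
  have hsub : wordsOfLen L n ⊆ wordsOfLen (GM L Cp G Cs M) n ∪ ⋃ q ∈ badPairs M n, concat q := by
    rintro w ⟨hwL, hlen⟩
    by_cases hwG : w ∈ GM L Cp G Cs M
    · exact Or.inl ⟨hwG, hlen⟩
    obtain ⟨u, v, x, hu, hv, hx, rfl⟩ := hcover w hwL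
    simp only [List.length_append] at hlen
    have hM : M < u.length + x.length := by
      by_contra! hle
      exact hwG ⟨hwL, u, v, x, hu, hv, hx, by omega, by omega, rfl⟩
    refine Or.inr (Set.mem_iUnion₂.2 ⟨(u.length, x.length), ?_, (u, v, x), ?_, rfl⟩)
    · simp only [badPairs, Finset.mem_filter, Finset.mem_product, Finset.mem_range]
      omega
    · exact ⟨⟨hu, rfl⟩, ⟨hv, by simp only; omega⟩, ⟨hx, rfl⟩⟩
  have hconcat : ∀ q, (concat q).ncard ≤ (wordsOfLen Cp q.1).ncard *
      (wordsOfLen G (n - q.1 - q.2)).ncard * (wordsOfLen Cs q.2).ncard := fun q => by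
    rw [mul_assoc, ← Set.ncard_prod, ← Set.ncard_prod]
    exact Set.ncard_image_le ((wordsOfLen_finite _ _).prod
      ((wordsOfLen_finite _ _).prod (wordsOfLen_finite _ _)))
  calc (wordsOfLen L n).ncard
      ≤ (wordsOfLen (GM L Cp G Cs M) n ∪ ⋃ q ∈ badPairs M n, concat q).ncard :=
        Set.ncard_le_ncard hsub ((wordsOfLen_finite _ n).union
          ((badPairs M n).finite_toSet.biUnion fun q _ => (wordsOfLen_finite _ _).prod
            ((wordsOfLen_finite _ _).prod (wordsOfLen_finite _ _)) |>.image _))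
    _ ≤ (wordsOfLen (GM L Cp G Cs M) n).ncard + (⋃ q ∈ badPairs M n, concat q).ncard :=
        Set.ncard_union_le _ _
    _ ≤ _ := Nat.add_le_add_left ((Finset.set_ncard_biUnion_le _ _).trans
        (Finset.sum_le_sum fun q _ => hconcat q)) _

lemma sum_badPairs_pow_le {r : ℝ} (hr0 : 0 ≤ r) (hr1 : r < 1) (M n : ℕ) :
    ∑ q ∈ badPairs M n, r ^ (2 * (q.1 + q.2)) ≤ r ^ M * (1 - r)⁻¹ ^ 2 := by
  have hgeom : ∑ i ∈ Finset.range (n + 1), r ^ i ≤ (1 - r)⁻¹ := by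
    simpa using geom_sum_Ico_le_of_lt_one (m := 0) (n := n + 1) hr0 hr1
  calc ∑ q ∈ badPairs M n, r ^ (2 * (q.1 + q.2))
      ≤ ∑ q ∈ badPairs M n, r ^ M * (r ^ q.1 * r ^ q.2) := Finset.sum_le_sum fun q hq => by
        simp only [badPairs, Finset.mem_filter] at hq
        rw [← pow_add, ← pow_add]
        exact pow_le_pow_of_le_one hr0 hr1.le (by omega)
    _ ≤ ∑ q ∈ Finset.range (n + 1) ×ˢ Finset.range (n + 1), r ^ M * (r ^ q.1 * r ^ q.2) :=
        Finset.sum_le_sum_of_subset_of_nonneg (Finset.filter_subset _ _)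
          fun _ _ _ => by positivity
    _ = r ^ M * (∑ i ∈ Finset.range (n + 1), r ^ i) ^ 2 := by
        rw [← Finset.mul_sum, sq, Finset.sum_mul_sum, Finset.sum_product]
    _ ≤ r ^ M * (1 - r)⁻¹ ^ 2 := by gcongr

lemma ncard_mul_ncard_mul_ncard_le {p t : ℕ} {Cp G Cs : Set (List (Fin p))} {B c h : ℝ}
    (hB : 0 ≤ B) (hCp : ∀ k : ℕ, ((wordsOfLen Cp k).ncard : ℝ) ≤ B * Real.exp (c * k))
    (hCs : ∀ k : ℕ, ((wordsOfLen Cs k).ncard : ℝ) ≤ B * Real.exp (c * k))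
    (hG : ∀ j : ℕ, ((wordsOfLen G j).ncard : ℝ) ≤ Real.exp (h * (j + t))) {a b n : ℕ}
    (hab : a + b ≤ n) :
    ((wordsOfLen Cp a).ncard * (wordsOfLen G (n - a - b)).ncard * (wordsOfLen Cs b).ncard : ℝ) ≤
      B ^ 2 * Real.exp (h * t) * Real.exp (h * n) * Real.exp (-(h - c) / 2) ^ (2 * (a + b)) := by
  have hcast : ((n - a - b : ℕ) : ℝ) = n - a - b := by
    rw [Nat.sub_sub, Nat.cast_sub hab, Nat.cast_add, sub_sub]
  calc ((wordsOfLen Cp a).ncard * (wordsOfLen G (n - a - b)).ncard * (wordsOfLen Cs b).ncard : ℝ)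
      ≤ B * Real.exp (c * a) * Real.exp (h * ((n - a - b : ℕ) + t)) * (B * Real.exp (c * b)) := by
        gcongr
        exacts [hCp a, hG _, hCs b]
    _ = B ^ 2 * Real.exp (h * t + h * n + (2 * (a + b) : ℕ) * (-(h - c) / 2)) := by
        rw [hcast, show h * t + h * n + (2 * (a + b) : ℕ) * (-(h - c) / 2) =
          c * a + h * (n - a - b + t) + c * b by push_cast; ring, Real.exp_add, Real.exp_add]
        ring
    _ = _ := by rw [Real.exp_add, Real.exp_add, Real.exp_nat_mul]; ring

lemma sum_badPairs_ncard_le {p t : ℕ} {Cp G Cs : Set (List (Fin p))} {B c h : ℝ} (hB : 0 ≤ B)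
    (hch : c < h)
    (hCp : ∀ k : ℕ, ((wordsOfLen Cp k).ncard : ℝ) ≤ B * Real.exp (c * k))
    (hCs : ∀ k : ℕ, ((wordsOfLen Cs k).ncard : ℝ) ≤ B * Real.exp (c * k))
    (hG : ∀ j : ℕ, ((wordsOfLen G j).ncard : ℝ) ≤ Real.exp (h * (j + t))) (M n : ℕ) :
    ∑ q ∈ badPairs M n, ((wordsOfLen Cp q.1).ncard * (wordsOfLen G (n - q.1 - q.2)).ncard *
        (wordsOfLen Cs q.2).ncard : ℝ) ≤
      B ^ 2 * Real.exp (h * t) * (1 - Real.exp (-(h - c) / 2))⁻¹ ^ 2 *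
        Real.exp (-(h - c) / 2) ^ M * Real.exp (h * n) := by
  have hr1 : Real.exp (-(h - c) / 2) < 1 := Real.exp_lt_one_iff.2 (by linarith)
  calc _ ≤ ∑ q ∈ badPairs M n, B ^ 2 * Real.exp (h * t) * Real.exp (h * n) *
        Real.exp (-(h - c) / 2) ^ (2 * (q.1 + q.2)) := Finset.sum_le_sum fun q hq =>
          ncard_mul_ncard_mul_ncard_le hB hCp hCs hG (by
            simp only [badPairs, Finset.mem_filter] at hq; omega)
    _ ≤ B ^ 2 * Real.exp (h * t) * Real.exp (h * n) *
        (Real.exp (-(h - c) / 2) ^ M * (1 - Real.exp (-(h - c) / 2))⁻¹ ^ 2) := by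
      rw [← Finset.mul_sum]
      gcongr
      exact sum_badPairs_pow_le (Real.exp_pos _).le hr1 M n
    _ = _ := by ring

theorem card_GM_large_general {p : ℕ} (X : Set (FullShift p))
    (Cp G Cs : Set (List (Fin p)))
    (hdec : Decomp (language X) Cp G Cs)
    (hI : ∃ t : ℕ, HasSpecS (language X) G t)
    (hII : growth (Cp ∪ Cs) < htop X) :
    ∀ δ : ℝ, 0 < δ → ∃ M : ℕ, ∀ n : ℕ,
      (1 - δ) * ((wordsOfLen (language X) n).ncard : ℝ) ≤
        ((wordsOfLen (GM (language X) Cp G Cs M) n).ncard : ℝ) := by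
  intro δ hδ
  obtain ⟨t, hspec⟩ := hI
  have hX : X.Nonempty := nonempty_of_htop_pos ((growth_nonneg _).trans_lt hII)
  obtain ⟨c, hc, hch⟩ := exists_between hII
  obtain ⟨B, hB, hCpCs⟩ := exists_ncard_wordsOfLen_le_mul_exp hc
  have hbad := sum_badPairs_ncard_le hB.le hch
    (fun k => (Nat.cast_le.2 (ncard_wordsOfLen_mono Set.subset_union_left k)).trans (hCpCs k))
    (fun k => (Nat.cast_le.2 (ncard_wordsOfLen_mono Set.subset_union_right k)).trans (hCpCs k))
    (ncard_wordsOfLen_le_exp_of_hasSpecS hspec (growth_nonneg _)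
      (tendsto_log_ncard_language_div hX))
  set r := Real.exp (-(htop X - c) / 2)
  set C := B ^ 2 * Real.exp (htop X * t) * (1 - r)⁻¹ ^ 2
  have hr1 : r < 1 := Real.exp_lt_one_iff.2 (by linarith)
  have hC : 0 < C := by have := sub_pos.2 hr1; positivity
  obtain ⟨M, hM⟩ := exists_pow_lt_of_lt_one (div_pos hδ hC) hr1
  refine ⟨M, fun n => ?_⟩
  have hsplit := (Nat.cast_le (α := ℝ)).2 (ncard_wordsOfLen_le_ncard_GM_add_sum hdec.2.2.2 M n)
  push_cast at hsplit
  have hsmall : C * r ^ M * Real.exp (htop X * n) ≤ δ * (wordsOfLen (language X) n).ncard :=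
    mul_le_mul (lt_div_iff₀' hC |>.1 hM).le (exp_htop_mul_le_ncard hX n) (by positivity) hδ.le
  linarith [hbad M n]

/-- **Lemma 5.5.** Under Conditions (I) and (II), for every `δ > 0` there is `M ∈ ℕ` such
that `#𝓖(M)_n ≥ (1 − δ) #𝓛_n` for all `n`. -/
theorem card_GM_large {p : ℕ} (X : Set (FullShift p))
    (hX : IsShiftSpace X) (Cp G Cs : Set (List (Fin p)))
    (hdec : Decomp (language X) Cp G Cs)
    (hI : ∃ t : ℕ, HasSpecS (language X) G t)
    (hII : growth (Cp ∪ Cs) < htop X) :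
    ∀ δ : ℝ, 0 < δ → ∃ M : ℕ, ∀ n : ℕ,
      (1 - δ) * ((wordsOfLen (language X) n).ncard : ℝ) ≤
        ((wordsOfLen (GM (language X) Cp G Cs M) n).ncard : ℝ) :=
  card_GM_large_general X Cp G Cs hdec hI hII
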